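/- Let E ⊆ ℝⁿ have σ-finite (n-1)-dimensional Hausdorff measure and let γ be a non-constant rectifiable path in ℝⁿ. Then for Lebesgue-almost every x ∈ ℝⁿ, the set E ∩ |γ + x| is finite or countable. -/

import Mathlib

open MeasureTheory Set
open scoped ENNReal

/-- A rectifiable curve in `ℝⁿ`, given by its arclength parametrization on `[0, len]`. -/
structure RectCurve (n : ℕ) where
  len : ℝ
  len_nonneg : 0 ≤ len
  toFun : ℝ → EuclideanSpace ℝ (Fin n)
  arclength : ∀ t ∈ Set.Icc 0 len, eVariationOn toFun (Set.Icc 0 t) = ENNReal.ofReal t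

/-- The line integral `∫_γ ρ ds` of a Borel function over a rectifiable curve
(via its arclength parametrization). -/
noncomputable def lineIntegral {n : ℕ} (ρ : EuclideanSpace ℝ (Fin n) → ℝ≥0∞)
    (γ : RectCurve n) : ℝ≥0∞ :=
  ∫⁻ t in Set.Icc 0 γ.len, ρ (γ.toFun t)

/-- A Borel function `ρ ≥ 0` is admissible for a curve family `Γ` if `∫_γ ρ ds ≥ 1`
for every `γ ∈ Γ`. -/
def Admissible {n : ℕ} (ρ : EuclideanSpace ℝ (Fin n) → ℝ≥0∞) (Γ : Set (RectCurve n)) : Prop :=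
  Measurable ρ ∧ ∀ γ ∈ Γ, 1 ≤ lineIntegral ρ γ

/-- The `p`-modulus of a curve family: `inf ∫ ρᵖ` over admissible `ρ`. -/
noncomputable def modulus {n : ℕ} (p : ℝ) (Γ : Set (RectCurve n)) : ℝ≥0∞ :=
  ⨅ (ρ : EuclideanSpace ℝ (Fin n) → ℝ≥0∞) (_ : Admissible ρ Γ), ∫⁻ x, ρ x ^ p

/-!
A piece `t` of diameter `D ≤ 1` of a cover of `A` meets `γ + x` only if `x` lies in the tube
`t - |γ|`, which is covered by about `L / D` balls of radius `2D` and so has volume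
`≲ (L + 1) D^(n-1)`. Summing over a near-optimal cover from the definition of `H^(n-1)` bounds
the total volume of the tubes by some `B < ∞` independent of the mesh. If `A ∩ |γ + x|`
contains `N` points further apart than the mesh, they lie in `N` distinct pieces, so `x` lies in
`N` tubes; by Markov's inequality such `x` form a set of measure `≤ B / N`. An infinite slice
contains `N` points separated at some positive scale, so the set of `x` with an infinite slice
has measure `≤ B / N` for every `N`.
-/

open Metric Filter Module
open scoped Pointwise

lemma RectCurve.lipschitzOnWith {n : ℕ} (γ : RectCurve n) :
    LipschitzOnWith 1 γ.toFun (Icc 0 γ.len) := by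
  intro s hs t ht
  rw [ENNReal.coe_one, one_mul]
  wlog hst : s ≤ t generalizing s t
  · rw [edist_comm, edist_comm s]; exact this ht hs (le_of_not_ge hst)
  have hsplit := eVariationOn.Icc_add_Icc γ.toFun (s := univ) hs.1 hst (mem_univ s)
  simp only [univ_inter, γ.arclength s hs, γ.arclength t ht] at hsplit
  have hvar : eVariationOn γ.toFun (Icc s t) = ENNReal.ofReal (t - s) := by
    rw [ENNReal.eq_sub_of_add_eq ENNReal.ofReal_ne_top ((add_comm _ _).trans hsplit),
      ENNReal.ofReal_sub _ hs.1]
  calc edist (γ.toFun s) (γ.toFun t)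
      ≤ eVariationOn γ.toFun (Icc s t) :=
        eVariationOn.edist_le _ (left_mem_Icc.2 hst) (right_mem_Icc.2 hst)
    _ = edist s t := by
        rw [hvar, edist_comm, edist_dist, Real.dist_eq, abs_of_nonneg (sub_nonneg.2 hst)]

lemma image_Icc_subset_biUnion_closedBall {X : Type*} [PseudoMetricSpace X] {f : ℝ → X}
    {L r : ℝ} (hf : LipschitzOnWith 1 f (Icc 0 L)) (hr : 0 < r) :
    f '' Icc 0 L ⊆ ⋃ i ∈ Finset.range (⌊L / r⌋₊ + 1), closedBall (f (i * r)) r := by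
  rintro _ ⟨s, hs, rfl⟩
  set i := ⌊s / r⌋₊
  have hir : (i : ℝ) * r ≤ s := (le_div_iff₀ hr).1 (Nat.floor_le (div_nonneg hs.1 hr.le))
  have hri : s < (i + 1) * r := (div_lt_iff₀ hr).1 (Nat.lt_floor_add_one _)
  have hiL : i ≤ ⌊L / r⌋₊ := Nat.floor_le_floor (div_le_div_of_nonneg_right hs.2 hr.le)
  refine mem_biUnion (Finset.mem_range_succ_iff.2 hiL) (mem_closedBall.2 ?_)
  calc dist (f s) (f (i * r)) ≤ 1 * dist s (i * r) :=
        hf.dist_le_mul _ hs _ ⟨by positivity, hir.trans hs.2⟩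
    _ ≤ r := by rw [one_mul, Real.dist_eq, abs_of_nonneg (by linarith)]; linarith

lemma exists_cover_tsum_ediam_rpow_lt {X : Type*} [EMetricSpace X] [MeasurableSpace X]
    [BorelSpace X] {d : ℝ} {A : Set X} {r c : ℝ≥0∞} (hr : 0 < r) (hc : μH[d] A < c) :
    ∃ t : ℕ → Set X, A ⊆ ⋃ j, t j ∧ (∀ j, ediam (t j) ≤ r) ∧
      ∑' j, ⨆ _ : (t j).Nonempty, ediam (t j) ^ d < c := by
  rw [Measure.hausdorffMeasure_apply] at hc
  simpa only [iInf_lt_iff, exists_prop] using (le_iSup₂ (f := fun r (_ : 0 < r) =>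
    ⨅ (t : ℕ → Set X) (_ : A ⊆ ⋃ j, t j) (_ : ∀ j, ediam (t j) ≤ r),
      ∑' j, ⨆ _ : (t j).Nonempty, ediam (t j) ^ d) r hr).trans_lt hc

lemma natCast_mul_measure_le_tsum_measure {α : Type*} [MeasurableSpace α] (μ : Measure α)
    {U : ℕ → Set α} {S : Set α} {N : ℕ}
    (hS : ∀ x ∈ S, ∃ s : Finset ℕ, s.card = N ∧ ∀ j ∈ s, x ∈ U j) :
    N * μ S ≤ ∑' j, μ (U j) := by
  set V := fun j => toMeasurable μ (U j)
  set g := fun x => ∑' j, (V j).indicator (1 : α → ℝ≥0∞) x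
  have hSg : S ⊆ {x | (N : ℝ≥0∞) ≤ g x} := fun x hx => by
    obtain ⟨s, rfl, hs⟩ := hS x hx
    calc (s.card : ℝ≥0∞) = ∑ j ∈ s, (V j).indicator 1 x := by
          rw [Finset.card_eq_sum_ones, Nat.cast_sum, Nat.cast_one]
          exact Finset.sum_congr rfl fun j hj =>
            (indicator_of_mem (subset_toMeasurable μ _ (hs j hj)) (1 : α → ℝ≥0∞)).symm
      _ ≤ g x := ENNReal.sum_le_tsum _
  have hV : ∀ j, Measurable ((V j).indicator (1 : α → ℝ≥0∞)) := fun j =>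
    measurable_one.indicator (measurableSet_toMeasurable μ _)
  calc N * μ S ≤ N * μ {x | (N : ℝ≥0∞) ≤ g x} := by gcongr
    _ ≤ ∫⁻ x, g x ∂μ := mul_meas_ge_le_lintegral₀ (Measurable.tsum hV).aemeasurable _
    _ = ∑' j, μ (U j) := by
        simp only [g, lintegral_tsum fun j => (hV j).aemeasurable,
          lintegral_indicator_one (measurableSet_toMeasurable μ _), V, measure_toMeasurable]

lemma Set.Finite.exists_pos_isSeparated {X : Type*} [MetricSpace X] {s : Set X}
    (hs : s.Finite) : ∃ ε > 0, IsSeparated ε s := by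
  set ε := hs.toFinset.offDiag.inf (fun p => edist p.1 p.2)
  have hε : 0 < ε := (Finset.lt_inf_iff ENNReal.zero_lt_top).2 fun p hp =>
    edist_pos.2 (Finset.mem_offDiag.1 hp).2.2
  refine ⟨ε / 2, ENNReal.half_pos hε.ne', fun x hx y hy hxy => ?_⟩
  have hxy' : (x, y) ∈ hs.toFinset.offDiag :=
    Finset.mem_offDiag.2 ⟨hs.mem_toFinset.2 hx, hs.mem_toFinset.2 hy, hxy⟩
  have hle : ε ≤ edist x y := Finset.inf_le hxy'
  exact (ENNReal.half_lt_self hε.ne' (hle.trans_lt (edist_lt_top x y)).ne).trans_le hle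

lemma Metric.IsSeparated.exists_finset_card_eq_of_ediam_le {X : Type*} [PseudoEMetricSpace X]
    {ε : ℝ≥0∞} {F : Finset X} (hF : IsSeparated ε (F : Set X)) {t : ℕ → Set X}
    (hcover : ↑F ⊆ ⋃ j, t j) (hdiam : ∀ j, ediam (t j) ≤ ε) :
    ∃ s : Finset ℕ, s.card = F.card ∧ ∀ j ∈ s, ∃ y ∈ F, y ∈ t j := by
  classical
  have hmem : ∀ y ∈ F, ∃ j, y ∈ t j := fun y hy =>
    mem_iUnion.1 (hcover (Finset.mem_coe.2 hy))
  choose! i hi using hmem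
  have hinj : InjOn i F := fun y hy z hz hyz => by
    by_contra hne
    exact (hF hy hz hne).not_ge
      ((edist_le_ediam_of_mem (hi y hy) (hyz ▸ hi z hz)).trans (hdiam _))
  refine ⟨F.image i, Finset.card_image_of_injOn hinj, fun j hj => ?_⟩
  obtain ⟨y, hy, rfl⟩ := Finset.mem_image.1 hj
  exact ⟨y, hy, hi y hy⟩

section Translates

variable {E : Type*} [NormedAddCommGroup E] [NormedSpace ℝ E] [FiniteDimensional ℝ E]
  [MeasurableSpace E] [BorelSpace E] (μ : Measure E) [μ.IsAddHaarMeasure]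
  {k : ℕ} {f : ℝ → E} {L : ℝ} {A : Set E}

lemma addHaar_sub_image_Icc_le_of_subset_closedBall (hk : finrank ℝ E = k + 1) (hL : 0 ≤ L)
    (hf : LipschitzOnWith 1 f (Icc 0 L)) {t : Set E} {e : E} {r : ℝ} (hr : 0 < r)
    (ht : t ⊆ closedBall e r) :
    μ (t - f '' Icc 0 L) ≤ ENNReal.ofReal (2 ^ (k + 1) * (L + r) * r ^ k) * μ (ball 0 1) := by
  set M := ⌊L / r⌋₊
  have hcover : t - f '' Icc 0 L ⊆
      ⋃ i ∈ Finset.range (M + 1), closedBall (e - f (i * r)) (2 * r) := by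
    rintro _ ⟨y, hy, z, hz, rfl⟩
    obtain ⟨i, hi, hzi⟩ := mem_iUnion₂.1 (image_Icc_subset_biUnion_closedBall hf hr hz)
    refine mem_biUnion hi (mem_closedBall.2 ?_)
    calc dist (y - z) (e - f (i * r)) ≤ dist y e + dist z (f (i * r)) := dist_sub_sub_le _ _ _ _
      _ ≤ 2 * r := by linarith [mem_closedBall.1 (ht hy), mem_closedBall.1 hzi]
  have hM : ((M + 1 : ℕ) : ℝ) * (2 * r) ^ (k + 1) ≤ 2 ^ (k + 1) * (L + r) * r ^ k := by
    have hML : (M : ℝ) ≤ L / r := Nat.floor_le (div_nonneg hL hr.le)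
    calc ((M + 1 : ℕ) : ℝ) * (2 * r) ^ (k + 1) ≤ (L / r + 1) * (2 * r) ^ (k + 1) := by
          push_cast; gcongr
      _ = 2 ^ (k + 1) * (L + r) * r ^ k := by field_simp; ring
  calc μ (t - f '' Icc 0 L)
      ≤ ∑ i ∈ Finset.range (M + 1), μ (closedBall (e - f (i * r)) (2 * r)) :=
        (measure_mono hcover).trans (measure_biUnion_finset_le _ _)
    _ = ((M + 1 : ℕ) : ℝ≥0∞) * (ENNReal.ofReal ((2 * r) ^ (k + 1)) * μ (ball 0 1)) := by
        simp [Measure.addHaar_closedBall _ _ (by positivity : 0 ≤ 2 * r), hk]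
    _ ≤ ENNReal.ofReal (2 ^ (k + 1) * (L + r) * r ^ k) * μ (ball 0 1) := by
        rw [← mul_assoc, ← ENNReal.ofReal_natCast, ← ENNReal.ofReal_mul (by positivity)]
        gcongr

lemma addHaar_sub_image_Icc_le (hk : finrank ℝ E = k + 1) (hL : 0 ≤ L)
    (hf : LipschitzOnWith 1 f (Icc 0 L)) {t : Set E} (ht : Bornology.IsBounded t) :
    μ (t - f '' Icc 0 L) ≤
      ENNReal.ofReal (2 ^ (k + 1) * (L + diam t) * diam t ^ k) * μ (ball 0 1) := by
  rcases t.eq_empty_or_nonempty with rfl | ⟨e, he⟩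
  · simp
  -- Letting `r ↓ diam t` is what bounds the tubes of pieces of diameter `0`.
  have hbound : ∀ r ∈ Ioi (diam t), μ (t - f '' Icc 0 L) ≤
      ENNReal.ofReal (2 ^ (k + 1) * (L + r) * r ^ k) * μ (ball 0 1) := fun r hr =>
    addHaar_sub_image_Icc_le_of_subset_closedBall μ hk hL hf (diam_nonneg.trans_lt hr)
      fun y hy => mem_closedBall.2 ((dist_le_diam_of_mem ht hy he).trans (le_of_lt hr))
  have hcont : Continuous fun r : ℝ =>
      ENNReal.ofReal (2 ^ (k + 1) * (L + r) * r ^ k) * μ (ball 0 1) :=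
    (ENNReal.continuous_mul_const measure_ball_lt_top.ne).comp
      (ENNReal.continuous_ofReal.comp (by fun_prop))
  exact ge_of_tendsto ((hcont.tendsto _).mono_left nhdsWithin_le_nhds)
    (eventually_nhdsWithin_of_forall hbound)

lemma addHaar_sub_image_Icc_le_ediam_rpow (hk : finrank ℝ E = k + 1) (hL : 0 ≤ L)
    (hf : LipschitzOnWith 1 f (Icc 0 L)) {t : Set E} (ht : ediam t ≤ 1) :
    μ (t - f '' Icc 0 L) ≤ ENNReal.ofReal (2 ^ (k + 1) * (L + 1)) * μ (ball 0 1) *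
      ⨆ _ : t.Nonempty, ediam t ^ (k : ℝ) := by
  rcases t.eq_empty_or_nonempty with rfl | hne
  · simp
  have hbdd : Bornology.IsBounded t :=
    isBounded_iff_ediam_ne_top.2 (ht.trans_lt ENNReal.one_lt_top).ne
  have hdiam : diam t ≤ 1 := ENNReal.toReal_le_of_le_ofReal zero_le_one (by simpa using ht)
  have hpow : ENNReal.ofReal (diam t ^ k) = ediam t ^ (k : ℝ) := by
    rw [ENNReal.rpow_natCast, ENNReal.ofReal_pow diam_nonneg, diam, ENNReal.ofReal_toReal
      (isBounded_iff_ediam_ne_top.1 hbdd)]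
  calc μ (t - f '' Icc 0 L)
      ≤ ENNReal.ofReal (2 ^ (k + 1) * (L + diam t) * diam t ^ k) * μ (ball 0 1) :=
        addHaar_sub_image_Icc_le μ hk hL hf hbdd
    _ ≤ ENNReal.ofReal (2 ^ (k + 1) * (L + 1) * diam t ^ k) * μ (ball 0 1) := by
        gcongr
    _ = _ := by
        rw [ciSup_pos hne, ← hpow, ENNReal.ofReal_mul (by positivity)]
        ring

lemma natCast_mul_addHaar_setOf_isSeparated_le (hk : finrank ℝ E = k + 1) (hL : 0 ≤ L)
    (hf : LipschitzOnWith 1 f (Icc 0 L)) (hA : μH[k] A ≠ ⊤) (N : ℕ) {ε : ℝ≥0∞}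
    (hε : 0 < ε) :
    N * μ {x | ∃ F : Finset E, F.card = N ∧ ↑F ⊆ A ∩ (fun s => f s + x) '' Icc 0 L ∧
      IsSeparated ε (F : Set E)} ≤
      ENNReal.ofReal (2 ^ (k + 1) * (L + 1)) * μ (ball 0 1) * (μH[k] A + 1) := by
  obtain ⟨t, hcover, hdiam, hsum⟩ := exists_cover_tsum_ediam_rpow_lt (d := k) (A := A)
    (lt_min hε zero_lt_one) (ENNReal.lt_add_right hA one_ne_zero)
  calc _ ≤ ∑' j, μ (t j - f '' Icc 0 L) := by
        refine natCast_mul_measure_le_tsum_measure μ fun x ⟨F, hcard, hFA, hF⟩ => ?_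
        obtain ⟨s, hs, hst⟩ := hF.exists_finset_card_eq_of_ediam_le
          (hFA.trans (inter_subset_left.trans hcover)) fun j => (hdiam j).trans (min_le_left _ _)
        refine ⟨s, hs.trans hcard, fun j hj => ?_⟩
        obtain ⟨y, hyF, hyt⟩ := hst j hj
        obtain ⟨r, hr, hry⟩ := (hFA hyF).2
        exact ⟨y, hyt, f r, mem_image_of_mem f hr, by simp only [← hry, add_sub_cancel_left]⟩
    _ ≤ ∑' j, ENNReal.ofReal (2 ^ (k + 1) * (L + 1)) * μ (ball 0 1) *
          ⨆ _ : (t j).Nonempty, ediam (t j) ^ (k : ℝ) :=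
        ENNReal.tsum_le_tsum fun j => addHaar_sub_image_Icc_le_ediam_rpow μ hk hL hf
          ((hdiam j).trans (min_le_right _ _))
    _ ≤ _ := by
        rw [ENNReal.tsum_mul_left]
        gcongr

theorem ae_countable_inter_image_Icc_add (hk : finrank ℝ E = k + 1) (hL : 0 ≤ L)
    (hf : LipschitzOnWith 1 f (Icc 0 L)) (hA : μH[k] A ≠ ⊤) :
    ∀ᵐ x ∂μ, (A ∩ (fun s => f s + x) '' Icc 0 L).Countable := by
  set sep : ℕ → ℕ → Set E := fun N m => {x | ∃ F : Finset E, F.card = N ∧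
    ↑F ⊆ A ∩ (fun s => f s + x) '' Icc 0 L ∧ IsSeparated (m : ℝ≥0∞)⁻¹ (F : Set E)}
  have hmono : ∀ N, Monotone (sep N) := fun N m m' hmm' x ⟨F, hcard, hFA, hF⟩ =>
    ⟨F, hcard, hFA, hF.anti (ENNReal.inv_le_inv.2 (Nat.cast_le.2 hmm'))⟩
  set bad := {x | ¬ (A ∩ (fun s => f s + x) '' Icc 0 L).Countable}
  have hsub : ∀ N, bad ⊆ ⋃ m, sep N m := by
    intro N x hx
    have hinf : (A ∩ (fun s => f s + x) '' Icc 0 L).Infinite := mt Set.Finite.countable hx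
    obtain ⟨F, hFA, hcard⟩ := hinf.exists_subset_card_eq N
    obtain ⟨ε, hε, hF⟩ := F.finite_toSet.exists_pos_isSeparated
    obtain ⟨m, hm⟩ := ENNReal.exists_inv_nat_lt hε.ne'
    exact mem_iUnion.2 ⟨m, F, hcard, hFA, hF.anti hm.le⟩
  set B := ENNReal.ofReal (2 ^ (k + 1) * (L + 1)) * μ (ball 0 1) * (μH[k] A + 1)
  have hB : B ≠ ⊤ := by
    finiteness [measure_ball_lt_top (μ := μ) (x := 0) (r := 1)]
  have hbound : ∀ N : ℕ, N * μ bad ≤ B :=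
    fun N => calc
      _ ≤ N * μ (⋃ m, sep N m) := by gcongr; exact hsub N
      _ = ⨆ m, N * μ (sep N m) := by rw [(hmono N).measure_iUnion, ENNReal.mul_iSup]
      _ ≤ B := iSup_le fun m => natCast_mul_addHaar_setOf_isSeparated_le μ hk hL hf hA N
          (ENNReal.inv_pos.2 (ENNReal.natCast_ne_top m))
  rw [ae_iff]
  by_contra hpos
  obtain ⟨N, hN⟩ := ENNReal.exists_nat_mul_gt hpos hB
  exact (hbound N).not_gt hN

end Translates

theorem stmt_11_general {n : ℕ} (E : Set (EuclideanSpace ℝ (Fin n)))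
    (hE : ∃ F : ℕ → Set (EuclideanSpace ℝ (Fin n)),
      E = ⋃ i, F i ∧ ∀ i, μH[(n : ℝ) - 1] (F i) < ⊤)
    (γ : RectCurve n) :
    ∀ᵐ x ∂(volume : Measure (EuclideanSpace ℝ (Fin n))),
      (E ∩ (fun t => γ.toFun t + x) '' Set.Icc 0 γ.len).Countable := by
  rcases n with _ | k
  · exact ae_of_all _ fun x => Set.to_countable _
  obtain ⟨F, rfl, hF⟩ := hE
  have hF' : ∀ i, μH[(k : ℝ)] (F i) ≠ ⊤ := fun i => by
    simpa using (hF i).ne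
  have hae : ∀ i, ∀ᵐ x ∂(volume : Measure (EuclideanSpace ℝ (Fin (k + 1)))),
      (F i ∩ (fun t => γ.toFun t + x) '' Icc 0 γ.len).Countable := fun i =>
    ae_countable_inter_image_Icc_add volume finrank_euclideanSpace_fin γ.len_nonneg
      γ.lipschitzOnWith (hF' i)
  filter_upwards [ae_all_iff.2 hae] with x hx
  rw [iUnion_inter]
  exact countable_iUnion hx

/-- If `E ⊆ ℝⁿ` has σ-finite `(n-1)`-dimensional Hausdorff measure and `γ`
is a non-constant rectifiable path, then for a.e. `x ∈ ℝⁿ` the set `E ∩ |γ + x|` is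
countable (finite or countably infinite). -/
theorem stmt_11 {n : ℕ} (E : Set (EuclideanSpace ℝ (Fin n)))
    (hE : ∃ F : ℕ → Set (EuclideanSpace ℝ (Fin n)),
      E = ⋃ i, F i ∧ ∀ i, μH[(n : ℝ) - 1] (F i) < ⊤)
    (γ : RectCurve n) (hγ : 0 < γ.len) :
    ∀ᵐ x ∂(volume : Measure (EuclideanSpace ℝ (Fin n))),
      (E ∩ (fun t => γ.toFun t + x) '' Set.Icc 0 γ.len).Countable :=
  stmt_11_general E hE γ
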